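/- arXiv:2508.20326 — 2 statements merged into one kernel-verified Lean document; each statement's English description precedes it below -/
import Mathlib

section
/- Let f: ℝ^d → ℝ be μ-strongly convex and M-smooth (twice differentiable with μI ⪯ ∇²f ⪯ MI), let η ∈ (0, 1/M), and fix θ ∈ ℝ^d with minimizer θ⋆ of f. For a vector g ∈ ℝ^d define θ⁺ = θ - η g and v = g - ∇f(θ). Then 2η(f(θ⁺) - f(θ⋆)) ≤ (1 - μη)‖θ - θ⋆‖² - ‖θ⁺ - θ⋆‖² - 2η⟨v, θ - θ⋆⟩ + η²/(1 - Mη) · ‖v‖². -/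
open RealInnerProductSpace

/-- One-step improvement lemma for SGD with a noisy gradient oracle. -/
theorem stmt_5 (d : ℕ) (f : EuclideanSpace ℝ (Fin d) → ℝ) (μ M η : ℝ)
    (hμ : 0 < μ) (hM : μ ≤ M) (hη0 : 0 < η) (hη1 : η < 1 / M)
    (hf : ContDiff ℝ 2 f)
    (hsc : ∀ x y : EuclideanSpace ℝ (Fin d),
      f x + ⟪gradient f x, y - x⟫ + μ / 2 * ‖y - x‖ ^ 2 ≤ f y)
    (hsm : ∀ x y : EuclideanSpace ℝ (Fin d),
      f y ≤ f x + ⟪gradient f x, y - x⟫ + M / 2 * ‖y - x‖ ^ 2)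
    (θ θs : EuclideanSpace ℝ (Fin d)) (hmin : ∀ x, f θs ≤ f x)
    (g : EuclideanSpace ℝ (Fin d)) :
    2 * η * (f (θ - η • g) - f θs) ≤
      (1 - μ * η) * ‖θ - θs‖ ^ 2 - ‖(θ - η • g) - θs‖ ^ 2
        - 2 * η * ⟪g - gradient f θ, θ - θs⟫
        + η ^ 2 / (1 - M * η) * ‖g - gradient f θ‖ ^ 2 := by
  have hM0 : 0 < M := lt_of_lt_of_le hμ hM
  have hc : 0 < 1 - M * η := by
    have h := (lt_div_iff₀ hM0).mp hη1
    nlinarith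
  set c : ℝ := 1 - M * η with hcdef
  set v : EuclideanSpace ℝ (Fin d) := g - gradient f θ with hvdef
  set a : EuclideanSpace ℝ (Fin d) := θ - θs with hadef
  have hgrad : gradient f θ = g - v := by rw [hvdef]; abel
  have h1 := hsm θ (θ - η • g)
  have h2 := hsc θ θs
  have e1 : (θ - η • g) - θ = -(η • g) := by abel
  rw [e1] at h1
  have e2 : θs - θ = -a := by rw [hadef]; abel
  rw [e2] at h2
  have r1 : ⟪gradient f θ, -(η • g)⟫ = -(η * (‖g‖ ^ 2 - ⟪v, g⟫)) := by
    rw [hgrad, inner_neg_right, real_inner_smul_right, inner_sub_left,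
      real_inner_self_eq_norm_sq]
  have r2 : ‖-(η • g)‖ ^ 2 = η ^ 2 * ‖g‖ ^ 2 := by
    rw [norm_neg, norm_smul, mul_pow, Real.norm_eq_abs, sq_abs]
  have r3 : ⟪gradient f θ, -a⟫ = -(⟪g, a⟫ - ⟪v, a⟫) := by
    rw [hgrad, inner_neg_right, inner_sub_left]
  have r4 : ‖-a‖ ^ 2 = ‖a‖ ^ 2 := by rw [norm_neg]
  rw [r1, r2] at h1
  rw [r3, r4] at h2
  have e3 : (θ - η • g) - θs = a - η • g := by rw [hadef]; abel
  have r5 : ‖(θ - η • g) - θs‖ ^ 2 = ‖a‖ ^ 2 - 2 * (η * ⟪g, a⟫) + η ^ 2 * ‖g‖ ^ 2 := by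
    rw [e3, norm_sub_sq_real, real_inner_smul_right, real_inner_comm, norm_smul,
      mul_pow, Real.norm_eq_abs, sq_abs]
  have keyraw : 0 ≤ c ^ 2 * ‖g‖ ^ 2 - 2 * (c * ⟪v, g⟫) + ‖v‖ ^ 2 := by
    have h0 : (0:ℝ) ≤ ‖c • g - v‖ ^ 2 := sq_nonneg _
    rw [norm_sub_sq_real, real_inner_smul_left, norm_smul, mul_pow,
      Real.norm_eq_abs, sq_abs, real_inner_comm] at h0
    linarith
  have key : 2 * ⟪v, g⟫ ≤ c * ‖g‖ ^ 2 + ‖v‖ ^ 2 / c := by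
    rw [← sub_nonneg]
    have hid : c * (c * ‖g‖ ^ 2 + ‖v‖ ^ 2 / c - 2 * ⟪v, g⟫)
        = c ^ 2 * ‖g‖ ^ 2 - 2 * (c * ⟪v, g⟫) + ‖v‖ ^ 2 := by
      field_simp; ring
    have h' : 0 ≤ c * (c * ‖g‖ ^ 2 + ‖v‖ ^ 2 / c - 2 * ⟪v, g⟫) := by
      rw [hid]; exact keyraw
    nlinarith [h', hc]
  have hη2 : (0:ℝ) ≤ η ^ 2 := sq_nonneg η
  have hkey2 : η ^ 2 * (2 * ⟪v, g⟫) ≤ η ^ 2 * (c * ‖g‖ ^ 2 + ‖v‖ ^ 2 / c) :=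
    mul_le_mul_of_nonneg_left key hη2
  have hdivgoal : η ^ 2 * (‖v‖ ^ 2 / c) = η ^ 2 / c * ‖v‖ ^ 2 := by ring
  have h1' := mul_le_mul_of_nonneg_left h1 (le_of_lt (mul_pos two_pos hη0))
  have h2' := mul_le_mul_of_nonneg_left h2 (le_of_lt (mul_pos two_pos hη0))
  rw [r5]
  linarith [h1', h2', hkey2, hdivgoal]
end

section
/- Let (d_n)_{n≥0} be nonnegative reals satisfying, for some ρ ∈ (0,1), b ≥ 0, and c ≥ 0: d_n ≤ ρ^N d_{n-1} + b·ξ_n + c for all n ≥ 1, where (ξ_n) are nonnegative with ξ_n ≤ C n^{-β}, C > 0, β ∈ (0,1), and ρ^N denotes an N-fold contraction factor q = ρ^N ∈ (0,1). Then d_m ≤ q^m d_0 + b[(Cm/2) q^{m/2} + C(m/2)^{-β}/(1-q)] + c/(1-q). -/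
/-- Unrolling lemma. -/
lemma stmt18_unroll (q b c : ℝ) (dseq ξ : ℕ → ℝ)
    (hrec : ∀ n : ℕ, 1 ≤ n → dseq n ≤ q * dseq (n - 1) + b * ξ n + c)
    (hq : 0 ≤ q) :
    ∀ m : ℕ, dseq m ≤ q ^ m * dseq 0
      + ∑ k ∈ Finset.Ioc 0 m, q ^ (m - k) * (b * ξ k + c) := by
  intro m
  induction m with
  | zero => simp
  | succ m ih =>
    have h1 := hrec (m + 1) (Nat.le_add_left 1 m)
    simp only [Nat.add_sub_cancel] at h1
    have h2 : q * dseq m ≤ q * (q ^ m * dseq 0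
        + ∑ k ∈ Finset.Ioc 0 m, q ^ (m - k) * (b * ξ k + c)) :=
      mul_le_mul_of_nonneg_left ih hq
    have hsum : q * ∑ k ∈ Finset.Ioc 0 m, q ^ (m - k) * (b * ξ k + c)
        = ∑ k ∈ Finset.Ioc 0 m, q ^ (m + 1 - k) * (b * ξ k + c) := by
      rw [Finset.mul_sum]
      refine Finset.sum_congr rfl fun k hk => ?_
      have hk' : k ≤ m := (Finset.mem_Ioc.mp hk).2
      rw [← mul_assoc, ← pow_succ']
      congr 2
      omega
    have hins : ∑ k ∈ Finset.Ioc 0 (m + 1), q ^ (m + 1 - k) * (b * ξ k + c)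
        = q ^ (m + 1 - (m + 1)) * (b * ξ (m + 1) + c)
          + ∑ k ∈ Finset.Ioc 0 m, q ^ (m + 1 - k) * (b * ξ k + c) := by
      rw [Finset.sum_Ioc_succ_top (Nat.zero_le m)]
      ring
    calc dseq (m + 1) ≤ q * dseq m + b * ξ (m + 1) + c := h1
      _ ≤ q * (q ^ m * dseq 0 + ∑ k ∈ Finset.Ioc 0 m, q ^ (m - k) * (b * ξ k + c))
          + b * ξ (m + 1) + c := by linarith
      _ = q ^ (m + 1) * dseq 0 + (q ^ (m + 1 - (m + 1)) * (b * ξ (m + 1) + c)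
          + ∑ k ∈ Finset.Ioc 0 m, q ^ (m + 1 - k) * (b * ξ k + c)) := by
        rw [mul_add, hsum]; simp [pow_succ]; ring
      _ = q ^ (m + 1) * dseq 0
          + ∑ k ∈ Finset.Ioc 0 (m + 1), q ^ (m + 1 - k) * (b * ξ k + c) := by
        rw [hins]

/-- Geometric tail bound. -/
lemma stmt18_geo (q : ℝ) (hq0 : 0 ≤ q) (hq1 : q < 1) (a m : ℕ) :
    ∑ k ∈ Finset.Ioc a m, q ^ (m - k) ≤ 1 / (1 - q) := by
  have h1q : 0 < 1 - q := by linarith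
  have hinj : ∀ x ∈ Finset.Ioc a m, ∀ y ∈ Finset.Ioc a m,
      m - x = m - y → x = y := by
    intro x hx y hy hxy
    have := (Finset.mem_Ioc.mp hx).2
    have := (Finset.mem_Ioc.mp hy).2
    omega
  calc ∑ k ∈ Finset.Ioc a m, q ^ (m - k)
      = ∑ j ∈ (Finset.Ioc a m).image (fun k => m - k), q ^ j :=
        (Finset.sum_image hinj).symm
    _ ≤ ∑ j ∈ Finset.range (m + 1), q ^ j := by
        apply Finset.sum_le_sum_of_subset_of_nonneg
        · intro j hj
          obtain ⟨k, hk, rfl⟩ := Finset.mem_image.mp hj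
          exact Finset.mem_range.mpr (by omega)
        · intro j _ _; positivity
    _ = (1 - q ^ (m + 1)) / (1 - q) := by
        rw [geom_sum_eq (by linarith)]
        rw [div_eq_div_iff (by linarith) (by linarith)]
        ring
    _ ≤ 1 / (1 - q) := by
        gcongr
        nlinarith [pow_nonneg hq0 (m+1)]

theorem stmt_18 (ρ : ℝ) (N : ℕ) (b c C β : ℝ) (hb : 0 ≤ b) (hc : 0 ≤ c)
    (hC : 0 < C) (hβ0 : 0 < β) (hβ1 : β < 1)
    (hq0 : 0 < ρ ^ N) (hq1 : ρ ^ N < 1)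
    (dseq ξ : ℕ → ℝ) (hd0 : ∀ n, 0 ≤ dseq n) (hξ0 : ∀ n, 0 ≤ ξ n)
    (hξ : ∀ n : ℕ, 1 ≤ n → ξ n ≤ C * (n : ℝ) ^ (-β))
    (hrec : ∀ n : ℕ, 1 ≤ n →
      dseq n ≤ ρ ^ N * dseq (n - 1) + b * ξ n + c) :
    ∀ m : ℕ, dseq m ≤ (ρ ^ N) ^ m * dseq 0
      + b * ((C * m / 2) * (ρ ^ N) ^ ((m : ℝ) / 2)
          + C * ((m : ℝ) / 2) ^ (-β) / (1 - ρ ^ N))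
      + c / (1 - ρ ^ N) := by
  intro m
  set q := ρ ^ N with hqdef
  have h1q : 0 < 1 - q := by linarith
  rcases Nat.eq_zero_or_pos m with rfl | hm
  · have hz : ((0:ℕ):ℝ) / 2 = 0 := by norm_num
    rw [hz, Real.zero_rpow (ne_of_lt (by linarith : -β < 0))]
    have hcd : 0 ≤ c / (1 - q) := by positivity
    have := hd0 0
    simp only [pow_zero, Nat.cast_zero, Real.rpow_zero]
    have hzero : b * (C * 0 / 2 * 1 + C * 0 / (1 - q)) = 0 := by ring
    linarith
  · have hun := stmt18_unroll q b c dseq ξ hrec hq0.le m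
    set h := m / 2 with hhdef
    have hhm : h ≤ m := Nat.div_le_self m 2
    -- split the sum into the b-part and the c-part
    have hsplit0 : ∑ k ∈ Finset.Ioc 0 m, q ^ (m - k) * (b * ξ k + c)
        = ∑ k ∈ Finset.Ioc 0 m, q ^ (m - k) * (b * ξ k)
          + ∑ k ∈ Finset.Ioc 0 m, q ^ (m - k) * c := by
      rw [← Finset.sum_add_distrib]
      exact Finset.sum_congr rfl fun k _ => by ring
    -- c-part bound
    have hcpart : ∑ k ∈ Finset.Ioc 0 m, q ^ (m - k) * c ≤ c / (1 - q) := by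
      calc ∑ k ∈ Finset.Ioc 0 m, q ^ (m - k) * c
          = (∑ k ∈ Finset.Ioc 0 m, q ^ (m - k)) * c := by rw [Finset.sum_mul]
        _ ≤ (1 / (1 - q)) * c := by
            apply mul_le_mul_of_nonneg_right (stmt18_geo q hq0.le hq1 0 m) hc
        _ = c / (1 - q) := by ring
    -- split the b-part at h
    have hsplit1 : ∑ k ∈ Finset.Ioc 0 h, q ^ (m - k) * (b * ξ k)
          + ∑ k ∈ Finset.Ioc h m, q ^ (m - k) * (b * ξ k)
        = ∑ k ∈ Finset.Ioc 0 m, q ^ (m - k) * (b * ξ k) :=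
      Finset.sum_Ioc_consecutive _ (Nat.zero_le h) hhm
    -- first half bound
    have hqr0 : 0 ≤ q ^ ((m : ℝ) / 2) := Real.rpow_nonneg hq0.le _
    have hpart1 : ∑ k ∈ Finset.Ioc 0 h, q ^ (m - k) * (b * ξ k)
        ≤ (C * m / 2) * q ^ ((m : ℝ) / 2) * b := by
      have hterm : ∀ k ∈ Finset.Ioc 0 h,
          q ^ (m - k) * (b * ξ k) ≤ q ^ ((m : ℝ) / 2) * (b * C) := by
        intro k hk
        obtain ⟨hk1, hk2⟩ := Finset.mem_Ioc.mp hk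
        have hkm : k ≤ m := hk2.trans hhm
        have hxi : ξ k ≤ C := by
          refine (hξ k hk1).trans ?_
          have : ((k:ℝ)) ^ (-β) ≤ 1 :=
            Real.rpow_le_one_of_one_le_of_nonpos (by exact_mod_cast hk1) (by linarith)
          nlinarith
        have hqpow : q ^ (m - k) ≤ q ^ ((m : ℝ) / 2) := by
          rw [← Real.rpow_natCast q (m - k)]
          apply Real.rpow_le_rpow_of_exponent_ge hq0 hq1.le
          have h2 : m ≤ 2 * (m - k) := by omega
          have h2' : (m : ℝ) ≤ 2 * ((m - k : ℕ) : ℝ) := by exact_mod_cast h2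
          linarith
        have hbx : 0 ≤ b * ξ k := mul_nonneg hb (hξ0 k)
        calc q ^ (m - k) * (b * ξ k) ≤ q ^ ((m : ℝ) / 2) * (b * ξ k) :=
              mul_le_mul_of_nonneg_right hqpow hbx
          _ ≤ q ^ ((m : ℝ) / 2) * (b * C) := by
              apply mul_le_mul_of_nonneg_left _ hqr0
              exact mul_le_mul_of_nonneg_left hxi hb
      calc ∑ k ∈ Finset.Ioc 0 h, q ^ (m - k) * (b * ξ k)
          ≤ (Finset.Ioc 0 h).card • (q ^ ((m : ℝ) / 2) * (b * C)) :=
            Finset.sum_le_card_nsmul _ _ _ hterm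
        _ = (h : ℝ) * (q ^ ((m : ℝ) / 2) * (b * C)) := by
            rw [Nat.card_Ioc]; simp [nsmul_eq_mul]
        _ ≤ ((m : ℝ) / 2) * (q ^ ((m : ℝ) / 2) * (b * C)) := by
            apply mul_le_mul_of_nonneg_right _ (by positivity)
            rw [hhdef]
            have h2 : m / 2 * 2 ≤ m := by omega
            have : ((m / 2 : ℕ) : ℝ) * 2 ≤ (m : ℝ) := by exact_mod_cast h2
            linarith
        _ = (C * m / 2) * q ^ ((m : ℝ) / 2) * b := by ring
    -- second half bound
    have hm2 : (0:ℝ) < (m : ℝ) / 2 := by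
      have : (1:ℝ) ≤ m := by exact_mod_cast hm
      linarith
    have hr0 : 0 ≤ ((m : ℝ) / 2) ^ (-β) := Real.rpow_nonneg hm2.le _
    have hpart2 : ∑ k ∈ Finset.Ioc h m, q ^ (m - k) * (b * ξ k)
        ≤ b * C * ((m : ℝ) / 2) ^ (-β) / (1 - q) := by
      have hterm : ∀ k ∈ Finset.Ioc h m,
          q ^ (m - k) * (b * ξ k) ≤ (b * C * ((m : ℝ) / 2) ^ (-β)) * q ^ (m - k) := by
        intro k hk
        obtain ⟨hk1, hk2⟩ := Finset.mem_Ioc.mp hk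
        have hk1' : 1 ≤ k := by omega
        have hkr : (m : ℝ) / 2 ≤ (k : ℝ) := by
          have : m ≤ 2 * k := by omega
          have : (m : ℝ) ≤ 2 * k := by exact_mod_cast this
          linarith
        have hxi : ξ k ≤ C * ((m : ℝ) / 2) ^ (-β) := by
          refine (hξ k hk1').trans ?_
          have hmono : ((k:ℝ)) ^ (-β) ≤ ((m : ℝ) / 2) ^ (-β) :=
            Real.rpow_le_rpow_of_nonpos hm2 hkr (by linarith)
          nlinarith
        have hqk : 0 ≤ q ^ (m - k) := pow_nonneg hq0.le _
        calc q ^ (m - k) * (b * ξ k)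
            ≤ q ^ (m - k) * (b * (C * ((m : ℝ) / 2) ^ (-β))) := by
              apply mul_le_mul_of_nonneg_left _ hqk
              exact mul_le_mul_of_nonneg_left hxi hb
          _ = (b * C * ((m : ℝ) / 2) ^ (-β)) * q ^ (m - k) := by ring
      calc ∑ k ∈ Finset.Ioc h m, q ^ (m - k) * (b * ξ k)
          ≤ ∑ k ∈ Finset.Ioc h m, (b * C * ((m : ℝ) / 2) ^ (-β)) * q ^ (m - k) :=
            Finset.sum_le_sum hterm
        _ = (b * C * ((m : ℝ) / 2) ^ (-β)) * ∑ k ∈ Finset.Ioc h m, q ^ (m - k) := by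
            rw [Finset.mul_sum]
        _ ≤ (b * C * ((m : ℝ) / 2) ^ (-β)) * (1 / (1 - q)) := by
            apply mul_le_mul_of_nonneg_left (stmt18_geo q hq0.le hq1 h m)
            positivity
        _ = b * C * ((m : ℝ) / 2) ^ (-β) / (1 - q) := by ring
    -- assemble
    have : dseq m ≤ q ^ m * dseq 0
        + ((C * m / 2) * q ^ ((m : ℝ) / 2) * b
          + b * C * ((m : ℝ) / 2) ^ (-β) / (1 - q))
        + c / (1 - q) := by
      rw [hsplit0, ← hsplit1] at hun
      linarith
    calc dseq m ≤ _ := this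
      _ = q ^ m * dseq 0 + b * ((C * m / 2) * q ^ ((m : ℝ) / 2)
          + C * ((m : ℝ) / 2) ^ (-β) / (1 - q)) + c / (1 - q) := by ring
end
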